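/- A finite set of flows {(l_1,d_1),…,(l_n,d_n)} is feasibly schedulable on c ≥ 1 identical channels (i.e., some schedule completes every flow by its deadline) if and only if the Least-Laxity-First schedule completes every flow by its deadline, equivalently if and only if under LLF scheduling the laxity of every flow remains non-negative until it is completed. -/
import Mathlib
open Finset


/-!
Flows `i : Fin n` with load `l i` (unit packets) and deadline `d i` (slot index)
are scheduled on `c` identical channels.  A schedule assigns to each slot
`t = 1, 2, …` a finite set of flows (each flow uses at most one channel per
slot, hence a `Finset`), of cardinality at most `c`.
-/

/-- Remaining load of flow `i` at the beginning of slot `t`: the initial load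
minus the number of slots among `1, …, t-1` in which `i` was served. -/
def remLoad {n : ℕ} (l : Fin n → ℕ) (S : ℕ → Finset (Fin n)) (i : Fin n) (t : ℕ) : ℕ :=
  l i - ((Finset.Ico 1 t).filter (fun s => i ∈ S s)).card

/-- Laxity of flow `i` at slot `t`: `(d i − (t − 1))` minus its remaining load. -/
def laxity {n : ℕ} (l d : Fin n → ℕ) (S : ℕ → Finset (Fin n)) (i : Fin n) (t : ℕ) : ℤ :=
  ((d i : ℤ) - ((t : ℤ) - 1)) - (remLoad l S i t : ℤ)

/-- A schedule on `c` channels serves at most `c` flows in each slot. -/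
def IsSchedule {n : ℕ} (c : ℕ) (S : ℕ → Finset (Fin n)) : Prop :=
  ∀ t : ℕ, (S t).card ≤ c

/-- A schedule completes flow `i` if `i` is served in at least `l i` of the
slots `1, …, d i` (i.e. within its deadline). -/
def Completes {n : ℕ} (l d : Fin n → ℕ) (S : ℕ → Finset (Fin n)) (i : Fin n) : Prop :=
  l i ≤ ((Finset.Icc 1 (d i)).filter (fun t => i ∈ S t)).card

/-- A Least-Laxity-First schedule: in each slot `t ≥ 1` it serves exactly
`min c (number of incomplete flows)` flows, all of which are incomplete
(positive remaining load), and every served flow has laxity no larger than any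
incomplete flow that is not served (ties broken arbitrarily). -/
def IsLLF {n : ℕ} (c : ℕ) (l d : Fin n → ℕ) (S : ℕ → Finset (Fin n)) : Prop :=
  ∀ t : ℕ, 1 ≤ t →
    (S t).card = min c (Finset.univ.filter (fun i => 0 < remLoad l S i t)).card ∧
    (∀ i ∈ S t, 0 < remLoad l S i t) ∧
    (∀ i ∈ S t, ∀ j : Fin n, 0 < remLoad l S j t → j ∉ S t →
      laxity l d S i t ≤ laxity l d S j t)



section Helpers
variable {α : Type*} [DecidableEq α]

lemma exists_min_key_subset (key : α → ℤ) (A : Finset α) :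
    ∀ k : ℕ, k ≤ A.card →
    ∃ T : Finset α, T ⊆ A ∧ T.card = k ∧ ∀ i ∈ T, ∀ j ∈ A, j ∉ T → key i ≤ key j := by
  intro k
  induction k with
  | zero => intro _; exact ⟨∅, by simp⟩
  | succ k ih =>
    intro hk
    obtain ⟨T, hTA, hcard, hmin⟩ := ih (Nat.le_of_succ_le hk)
    have hne : (A \ T).Nonempty := by
      rw [← Finset.card_pos, Finset.card_sdiff_of_subset hTA, hcard]; omega
    obtain ⟨j0, hj0, hj0min⟩ := Finset.exists_min_image (A \ T) key hne
    have hj0A : j0 ∈ A := (Finset.mem_sdiff.mp hj0).1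
    have hj0T : j0 ∉ T := (Finset.mem_sdiff.mp hj0).2
    refine ⟨insert j0 T, Finset.insert_subset hj0A hTA, by
      rw [Finset.card_insert_of_notMem hj0T, hcard], ?_⟩
    intro i hi j hj hjT
    have hjT' : j ∉ T := fun h => hjT (Finset.mem_insert_of_mem h)
    rcases Finset.mem_insert.mp hi with rfl | hiT
    · exact hj0min j (Finset.mem_sdiff.mpr ⟨hj, hjT'⟩)
    · exact hmin i hiT j hj hjT'

lemma exists_top_subset (w : α → ℕ) (A : Finset α) (k : ℕ) (hk : k ≤ A.card) :
    ∃ C : Finset α, C ⊆ A ∧ C.card = k ∧ ∀ i ∈ C, ∀ j ∈ A, j ∉ C → w j ≤ w i := by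
  obtain ⟨C, h1, h2, h3⟩ := exists_min_key_subset (fun j => -(w j : ℤ)) A k hk
  exact ⟨C, h1, h2, fun i hi j hj hjC => by have := h3 i hi j hj hjC; omega⟩

/-- Capacity of a set of flows with windows `w` on `c` channels, horizon `M`. -/
def capN (c M : ℕ) (w : α → ℕ) (A : Finset α) : ℕ :=
  ∑ s ∈ Finset.Icc 1 M, min c ((A.filter fun j => s ≤ w j).card)

omit [DecidableEq α] in
lemma sum_window_count (M : ℕ) (w : α → ℕ) (B : Finset α) (hM : ∀ j ∈ B, w j ≤ M) :
    ∑ s ∈ Finset.Icc 1 M, ((B.filter fun j => s ≤ w j).card) = ∑ j ∈ B, w j := by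
  calc ∑ s ∈ Finset.Icc 1 M, ((B.filter fun j => s ≤ w j).card)
      = ∑ s ∈ Finset.Icc 1 M, ∑ j ∈ B, if s ≤ w j then 1 else 0 :=
        Finset.sum_congr rfl fun s _ => Finset.card_filter _ _
    _ = ∑ j ∈ B, ∑ s ∈ Finset.Icc 1 M, if s ≤ w j then 1 else 0 := Finset.sum_comm
    _ = ∑ j ∈ B, w j := by
        refine Finset.sum_congr rfl fun j hj => ?_
        rw [← Finset.card_filter]
        have : (Finset.Icc 1 M).filter (fun s => s ≤ w j) = Finset.Icc 1 (w j) := by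
          ext s; simp only [Finset.mem_filter, Finset.mem_Icc]
          have := hM j hj; omega
        simp [this]

omit [DecidableEq α] in
lemma capN_singleton (c M : ℕ) (hc : 1 ≤ c) (w : α → ℕ) (j : α) (hM : w j ≤ M) :
    capN c M w {j} = w j := by
  unfold capN
  have h1 : ∀ s, ({j} : Finset α).filter (fun i => s ≤ w i) = if s ≤ w j then {j} else ∅ := by
    intro s; split <;> (ext x; simp_all)
  calc ∑ s ∈ Finset.Icc 1 M, min c ((({j} : Finset α).filter fun i => s ≤ w i).card)
      = ∑ s ∈ Finset.Icc 1 M, if s ≤ w j then 1 else 0 := by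
        refine Finset.sum_congr rfl fun s _ => ?_
        rw [h1 s]; split <;> simp [Nat.min_eq_right hc, *]
    _ = w j := by
        rw [← Finset.card_filter]
        have : (Finset.Icc 1 M).filter (fun s => s ≤ w j) = Finset.Icc 1 (w j) := by
          ext s; simp only [Finset.mem_filter, Finset.mem_Icc]; omega
        simp [this]

omit [DecidableEq α] in
lemma top_count (c : ℕ) (w : α → ℕ) (C A : Finset α) (hCA : C ⊆ A) (hCc : C.card = c)
    (dom : ∀ i ∈ C, ∀ j ∈ A, j ∉ C → w j ≤ w i) (s : ℕ) :
    min c ((A.filter fun j => s ≤ w j).card) = (C.filter fun j => s ≤ w j).card := by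
  by_cases hfull : (C.filter fun j => s ≤ w j).card = c
  · have h1 : c ≤ (A.filter fun j => s ≤ w j).card := by
      rw [← hfull]; exact Finset.card_le_card (Finset.filter_subset_filter _ hCA)
    omega
  · -- some i ∈ C with w i < s
    have hlt : (C.filter fun j => s ≤ w j).card < c :=
      lt_of_le_of_ne (hCc ▸ Finset.card_le_card (Finset.filter_subset _ _)) hfull
    obtain ⟨i, hiC, his⟩ : ∃ i ∈ C, ¬ (s ≤ w i) := by
      by_contra h
      push_neg at h
      have : C.filter (fun j => s ≤ w j) = C := Finset.filter_eq_self.mpr h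
      rw [this, hCc] at hlt; omega
    have heq : A.filter (fun j => s ≤ w j) = C.filter (fun j => s ≤ w j) := by
      apply Finset.Subset.antisymm
      · intro x hx
        rw [Finset.mem_filter] at hx ⊢
        refine ⟨?_, hx.2⟩
        by_contra hxC
        exact his (le_trans hx.2 (dom i hiC x hx.1 hxC))
      · exact Finset.filter_subset_filter _ hCA
    rw [heq]; omega

omit [DecidableEq α] in
lemma cap_eq_top (c M : ℕ) (w : α → ℕ) (C A : Finset α) (hCA : C ⊆ A) (hCc : C.card = c)
    (dom : ∀ i ∈ C, ∀ j ∈ A, j ∉ C → w j ≤ w i) (hM : ∀ j ∈ C, w j ≤ M) :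
    capN c M w A = ∑ j ∈ C, w j := by
  unfold capN
  rw [Finset.sum_congr rfl fun s _ => top_count c w C A hCA hCc dom s]
  exact sum_window_count M w C hM

end Helpers

section Key
variable {α : Type*} [DecidableEq α]

lemma Icc_one_split (M : ℕ) (hM1 : 1 ≤ M) :
    Finset.Icc 1 M = insert 1 (Finset.Icc 2 M) := by
  ext s; simp only [Finset.mem_Icc, Finset.mem_insert]; omega

/-- The key preservation step: serving the `min c |P|` least-laxity flows keeps the
Hall-type capacity condition. -/
lemma key_step (c M : ℕ) (hc : 1 ≤ c) (hM1 : 1 ≤ M) (w r : α → ℕ)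
    (P T : Finset α)
    (hM : ∀ j, w j ≤ M)
    (hr : ∀ j ∈ P, 1 ≤ r j)
    (hH : ∀ B ⊆ P, ∑ j ∈ B, r j ≤ capN c M w B)
    (hTP : T ⊆ P) (hTc : T.card = min c P.card)
    (hmin : ∀ i ∈ T, ∀ j ∈ P, j ∉ T → w i + r j ≤ w j + r i) :
    ∀ A ⊆ P, ∑ j ∈ A, (r j - if j ∈ T then 1 else 0) ≤ capN c M (fun j => w j - 1) A := by
  have hrw : ∀ j ∈ P, r j ≤ w j := by
    intro j hj
    have h1 := hH {j} (Finset.singleton_subset_iff.mpr hj)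
    rwa [Finset.sum_singleton, capN_singleton c M hc w j (hM j)] at h1
  have hL1 : ∀ j ∈ P, j ∉ T → r j + 1 ≤ w j := by
    intro j hjP hjT
    by_cases hPc : P.card ≤ c
    · exfalso
      have hTc' : T.card = P.card := by omega
      have : T = P := Finset.eq_of_subset_of_card_le hTP (le_of_eq hTc'.symm)
      exact hjT (this ▸ hjP)
    · push_neg at hPc
      have hTcard : T.card = c := by omega
      by_contra hcon
      have hrj : r j = w j := by have := hrw j hjP; omega
      have hTrw : ∀ i ∈ T, r i = w i := by
        intro i hi
        have h1 := hmin i hi j hjP hjT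
        have h2 := hrw i (hTP hi)
        omega
      set B : Finset α := insert j T with hB
      have hBP : B ⊆ P := Finset.insert_subset hjP hTP
      have hBcard : B.card = c + 1 := by
        rw [hB, Finset.card_insert_of_notMem hjT, hTcard]
      have hBrw : ∀ i ∈ B, r i = w i := by
        intro i hi
        rcases Finset.mem_insert.mp hi with rfl | hi
        · exact hrj
        · exact hTrw i hi
      have hBw1 : ∀ i ∈ B, 1 ≤ w i := by
        intro i hi
        have := hr i (hBP hi); have := hBrw i hi; omega
      have hcount1 : (B.filter fun i => 1 ≤ w i).card = c + 1 := by
        rw [Finset.filter_true_of_mem hBw1, hBcard]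
      have hsum : ∑ s ∈ Finset.Icc 1 M, ((B.filter fun i => s ≤ w i).card) = ∑ i ∈ B, w i :=
        sum_window_count M w B (fun i _ => hM i)
      have hsplit1 : ∑ s ∈ Finset.Icc 1 M, ((B.filter fun i => s ≤ w i).card)
          = (c+1) + ∑ s ∈ Finset.Icc 2 M, ((B.filter fun i => s ≤ w i).card) := by
        rw [Icc_one_split M hM1, Finset.sum_insert (by simp), hcount1]
      have hsplit2 : capN c M w B
          = c + ∑ s ∈ Finset.Icc 2 M, min c ((B.filter fun i => s ≤ w i).card) := by
        unfold capN
        rw [Icc_one_split M hM1, Finset.sum_insert (by simp), hcount1]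
        congr 1
        omega
      have htail : ∑ s ∈ Finset.Icc 2 M, min c ((B.filter fun i => s ≤ w i).card)
          ≤ ∑ s ∈ Finset.Icc 2 M, ((B.filter fun i => s ≤ w i).card) :=
        Finset.sum_le_sum fun s _ => min_le_right _ _
      have hHB := hH B hBP
      have hBeq : ∑ i ∈ B, r i = ∑ i ∈ B, w i := Finset.sum_congr rfl fun i hi => hBrw i hi
      omega
  intro A hAP
  have hsum_split : ∑ j ∈ A, (r j - if j ∈ T then 1 else 0) + (A ∩ T).card = ∑ j ∈ A, r j := by
    have h1 : ∑ j ∈ A, (r j - if j ∈ T then 1 else 0) + ∑ j ∈ A, (if j ∈ T then 1 else 0)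
        = ∑ j ∈ A, r j := by
      rw [← Finset.sum_add_distrib]
      refine Finset.sum_congr rfl fun j hj => ?_
      have := hr j (hAP hj)
      split <;> omega
    have h2 : ∑ j ∈ A, (if j ∈ T then (1:ℕ) else 0) = (A ∩ T).card := by
      rw [← Finset.card_filter, Finset.filter_mem_eq_inter]
    omega
  by_cases hAc : A.card ≤ c
  -- CASE I : small A
  · have hcap' : capN c M (fun j => w j - 1) A = ∑ j ∈ A, (w j - 1) := by
      unfold capN
      have hpt : ∀ s ∈ Finset.Icc 1 M,
          min c ((A.filter fun j => s ≤ w j - 1).card) = (A.filter fun j => s ≤ w j - 1).card := by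
        intro s _
        have : (A.filter fun j => s ≤ w j - 1).card ≤ c :=
          le_trans (Finset.card_le_card (Finset.filter_subset _ _)) hAc
        omega
      rw [Finset.sum_congr rfl hpt]
      exact sum_window_count M (fun j => w j - 1) A (fun j _ => by show w j - 1 ≤ M; have := hM j; omega)
    rw [hcap']
    refine Finset.sum_le_sum fun j hj => ?_
    by_cases hjT : j ∈ T
    · have h1 := hrw j (hAP hj); have h2 := hr j (hAP hj); simp only [hjT, if_true]; omega
    · have := hL1 j (hAP hj) hjT; simp only [hjT, if_false]; omega
  -- CASE II : large A
  · push_neg at hAc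
    obtain ⟨C, hCA, hCc, hdom⟩ := exists_top_subset w A c (le_of_lt hAc)
    obtain ⟨i0, hi0C, hi0min⟩ :=
      Finset.exists_min_image C w (by rw [← Finset.card_pos, hCc]; omega)
    set m := w i0 with hm
    have hm1 : 1 ≤ m := le_trans (hr i0 (hAP (hCA hi0C))) (hrw i0 (hAP (hCA hi0C)))
    have hAoutC : ∀ x ∈ A, x ∉ C → w x ≤ m := fun x hx hxC => hdom i0 hi0C x hx hxC
    have hcap'A : capN c M (fun j => w j - 1) A + c = ∑ j ∈ C, w j := by
      have hstep : ∀ s : ℕ, 1 ≤ s →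
          min c ((A.filter fun j => s ≤ w j - 1).card)
            = (C.filter fun j => s ≤ w j - 1).card := by
        intro s hs
        have e1 : A.filter (fun j => s ≤ w j - 1) = A.filter (fun j => s + 1 ≤ w j) := by
          apply Finset.filter_congr; intro j _
          constructor <;> (intro h; omega)
        have e2 : C.filter (fun j => s ≤ w j - 1) = C.filter (fun j => s + 1 ≤ w j) := by
          apply Finset.filter_congr; intro j _
          constructor <;> (intro h; omega)
        rw [e1, e2]
        exact top_count c w C A hCA hCc hdom (s+1)
      have hcapC : capN c M (fun j => w j - 1) A
          = ∑ s ∈ Finset.Icc 1 M, ((C.filter fun j => s ≤ w j - 1).card) := by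
        unfold capN
        exact Finset.sum_congr rfl fun s hs => hstep s (Finset.mem_Icc.mp hs).1
      rw [hcapC, sum_window_count M (fun j => w j - 1) C (fun j _ => by show w j - 1 ≤ M; have := hM j; omega)]
      have hCw1 : ∑ j ∈ C, (w j - 1) + C.card = ∑ j ∈ C, w j := by
        have heq : ∑ j ∈ C, ((w j - 1) + 1) = ∑ j ∈ C, w j :=
          Finset.sum_congr rfl fun j hj => by
            have h1 := hr j (hAP (hCA hj)); have h2 := hrw j (hAP (hCA hj)); omega
        rw [Finset.sum_add_distrib, Finset.sum_const, smul_eq_mul, mul_one] at heq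
        exact heq
      omega
    set v := (T \ A).card with hv
    have hTcard : T.card = c := by
      have := Finset.card_le_card hAP
      omega
    have hvc : (A ∩ T).card + v = c := by
      rw [hv, Finset.inter_comm, ← hTcard]
      exact Finset.card_inter_add_card_sdiff T A
    have hmain : ∑ j ∈ A, r j + v ≤ ∑ j ∈ C, w j := by
      by_cases hx : ∃ j1 ∈ T, j1 ∉ A ∧ m + r j1 ≤ w j1
      -- CASE II.2
      · obtain ⟨j1, hj1T, hj1A, hj1lax⟩ := hx
        have hus : ∀ j ∈ P, j ∉ T → m + r j ≤ w j := by
          intro j hj hjT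
          have := hmin j1 hj1T j hj hjT
          omega
        have hATC : ∀ x ∈ A, x ∉ T → x ∈ C := by
          intro x hxA hxT
          by_contra hxC
          have h1 := hAoutC x hxA hxC
          have h2 := hus x (hAP hxA) hxT
          have := hr x (hAP hxA)
          omega
        have hCT_eq : C \ T = A \ T := by
          apply Finset.Subset.antisymm
          · exact Finset.sdiff_subset_sdiff hCA (le_refl _)
          · intro x hx
            rw [Finset.mem_sdiff] at hx ⊢
            exact ⟨hATC x hx.1 hx.2, hx.2⟩
        have hk1 : (A \ T).card + (A ∩ T).card = A.card := Finset.card_sdiff_add_card_inter A T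
        have hk2 : (A \ C).card + C.card = A.card := by
          have := Finset.card_sdiff_add_card_inter A C
          rwa [Finset.inter_eq_right.mpr hCA] at this
        have hCTcard : (C \ T).card = (A \ C).card + v := by
          rw [hCT_eq]; omega
        have hs1 : ∑ j ∈ C ∩ T, w j + ∑ j ∈ C \ T, w j = ∑ j ∈ C, w j :=
          Finset.sum_inter_add_sum_sdiff C T w
        have hs2 : ∑ j ∈ C ∩ T, r j + ∑ j ∈ C \ T, r j = ∑ j ∈ C, r j :=
          Finset.sum_inter_add_sum_sdiff C T r
        have hs3 : ∑ j ∈ A ∩ C, r j + ∑ j ∈ A \ C, r j = ∑ j ∈ A, r j :=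
          Finset.sum_inter_add_sum_sdiff A C r
        have hACeq : A ∩ C = C := Finset.inter_eq_right.mpr hCA
        rw [hACeq] at hs3
        have hb1 : ∑ j ∈ C ∩ T, r j ≤ ∑ j ∈ C ∩ T, w j :=
          Finset.sum_le_sum fun j hj => hrw j (hAP (hCA (Finset.mem_inter.mp hj).1))
        have hb2' : (C \ T).card * m + ∑ j ∈ C \ T, r j ≤ ∑ j ∈ C \ T, w j := by
          calc (C \ T).card * m + ∑ j ∈ C \ T, r j = ∑ j ∈ C \ T, (m + r j) := by
                rw [Finset.sum_add_distrib, Finset.sum_const, smul_eq_mul]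
            _ ≤ ∑ j ∈ C \ T, w j := by
                refine Finset.sum_le_sum fun j hj => ?_
                rw [Finset.mem_sdiff] at hj
                exact hus j (hAP (hCA hj.1)) hj.2
        have hb3 : ∑ j ∈ A \ C, r j ≤ (A \ C).card * m := by
          calc ∑ j ∈ A \ C, r j ≤ ∑ _j ∈ A \ C, m := by
                refine Finset.sum_le_sum fun j hj => ?_
                rw [Finset.mem_sdiff] at hj
                exact le_trans (hrw j (hAP hj.1)) (hAoutC j hj.1 hj.2)
            _ = (A \ C).card * m := by rw [Finset.sum_const, smul_eq_mul]
        have hvm : v ≤ v * m := Nat.le_mul_of_pos_right v hm1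
        have hprod : (C \ T).card * m = (A \ C).card * m + v * m := by
          rw [hCTcard, add_mul]
        omega
      -- CASE II.1
      · push_neg at hx
        have hATcard : c ≤ (A ∪ T).card :=
          le_trans (le_of_lt hAc) (Finset.card_le_card Finset.subset_union_left)
        obtain ⟨C₂, hC2sub, hC2c, hdom2⟩ := exists_top_subset w (A ∪ T) c hATcard
        have hATP : A ∪ T ⊆ P := Finset.union_subset hAP hTP
        have hcapAT : capN c M w (A ∪ T) = ∑ j ∈ C₂, w j :=
          cap_eq_top c M w C₂ (A ∪ T) hC2sub hC2c hdom2 (fun j _ => hM j)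
        have hHAT := hH (A ∪ T) hATP
        rw [hcapAT] at hHAT
        have hsumAT : ∑ j ∈ A ∪ T, r j = ∑ j ∈ A, r j + ∑ j ∈ T \ A, r j := by
          rw [← Finset.union_sdiff_self_eq_union (s := A) (t := T)]
          exact Finset.sum_union Finset.sdiff_disjoint.symm
        set u := (C₂ \ A).card with hu
        have hC2AT : C₂ \ A ⊆ T \ A := by
          intro x hx
          rw [Finset.mem_sdiff] at hx ⊢
          rcases Finset.mem_union.mp (hC2sub hx.1) with h | h
          · exact absurd h hx.2
          · exact ⟨h, hx.2⟩
        have huv : u ≤ v := Finset.card_le_card hC2AT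
        have h1 : ∑ j ∈ C₂ ∩ A, w j + ∑ j ∈ C₂ \ A, w j = ∑ j ∈ C₂, w j :=
          Finset.sum_inter_add_sum_sdiff C₂ A w
        -- (2) : ∑_{C₂∩A} w + u*m ≤ ∑_C w
        have h2 : ∑ j ∈ C₂ ∩ A, w j + u * m ≤ ∑ j ∈ C, w j := by
          have e1 : ∑ j ∈ (C₂ ∩ A) ∩ C, w j + ∑ j ∈ (C₂ ∩ A) \ C, w j = ∑ j ∈ C₂ ∩ A, w j :=
            Finset.sum_inter_add_sum_sdiff (C₂ ∩ A) C w
          have e2 : ∑ j ∈ C ∩ C₂, w j + ∑ j ∈ C \ C₂, w j = ∑ j ∈ C, w j :=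
            Finset.sum_inter_add_sum_sdiff C C₂ w
          have e3 : (C₂ ∩ A) ∩ C = C ∩ C₂ := by
            ext x
            simp only [Finset.mem_inter]
            constructor
            · rintro ⟨⟨ha, _⟩, hb⟩; exact ⟨hb, ha⟩
            · rintro ⟨ha, hb⟩; exact ⟨⟨hb, hCA ha⟩, ha⟩
          have e4 : ∑ j ∈ (C₂ ∩ A) \ C, w j ≤ ((C₂ ∩ A) \ C).card * m := by
            calc ∑ j ∈ (C₂ ∩ A) \ C, w j ≤ ∑ _j ∈ (C₂ ∩ A) \ C, m := by
                  refine Finset.sum_le_sum fun j hj => ?_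
                  rw [Finset.mem_sdiff, Finset.mem_inter] at hj
                  exact hAoutC j hj.1.2 hj.2
              _ = ((C₂ ∩ A) \ C).card * m := by rw [Finset.sum_const, smul_eq_mul]
          have e5 : (C \ C₂).card * m ≤ ∑ j ∈ C \ C₂, w j := by
            calc (C \ C₂).card * m = ∑ _j ∈ C \ C₂, m := by rw [Finset.sum_const, smul_eq_mul]
              _ ≤ ∑ j ∈ C \ C₂, w j := by
                  refine Finset.sum_le_sum fun j hj => ?_
                  rw [Finset.mem_sdiff] at hj
                  exact hi0min j hj.1
          have k1 : (C₂ ∩ A).card + u = c := by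
            have := Finset.card_sdiff_add_card_inter C₂ A
            rw [← hC2c]
            omega
          have k2 : ((C₂ ∩ A) \ C).card + ((C₂ ∩ A) ∩ C).card = (C₂ ∩ A).card :=
            Finset.card_sdiff_add_card_inter (C₂ ∩ A) C
          have k3 : (C \ C₂).card + (C ∩ C₂).card = C.card :=
            Finset.card_sdiff_add_card_inter C C₂
          have k4 : ((C₂ ∩ A) ∩ C).card = (C ∩ C₂).card := by rw [e3]
          have e6 : ((C₂ ∩ A) \ C).card + u = (C \ C₂).card := by omega
          have e3s : ∑ j ∈ (C₂ ∩ A) ∩ C, w j = ∑ j ∈ C ∩ C₂, w j := by rw [e3]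
          have e7 : (((C₂ ∩ A) \ C).card + u) * m = (C \ C₂).card * m := by rw [e6]
          rw [add_mul] at e7
          -- combine
          have : ∑ j ∈ C₂ ∩ A, w j + u * m
              ≤ ∑ j ∈ (C₂ ∩ A) ∩ C, w j + ((C₂ ∩ A) \ C).card * m + u * m := by omega
          omega
        -- (3) : ∑_{C₂\A} w + u ≤ ∑_{C₂\A} r + u*m
        have h3 : ∑ j ∈ C₂ \ A, w j + u ≤ ∑ j ∈ C₂ \ A, r j + u * m := by
          calc ∑ j ∈ C₂ \ A, w j + u = ∑ j ∈ C₂ \ A, (w j + 1) := by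
                rw [Finset.sum_add_distrib, Finset.sum_const, smul_eq_mul, mul_one]
            _ ≤ ∑ j ∈ C₂ \ A, (r j + m) := by
                refine Finset.sum_le_sum fun j hj => ?_
                have hj' := hC2AT hj
                rw [Finset.mem_sdiff] at hj'
                have := hx j hj'.1 hj'.2
                omega
            _ = ∑ j ∈ C₂ \ A, r j + u * m := by
                rw [Finset.sum_add_distrib, Finset.sum_const, smul_eq_mul]
        -- (4)
        have h4 : ∑ j ∈ C₂ \ A, r j + (v - u) ≤ ∑ j ∈ T \ A, r j := by
          have hsplit : ∑ j ∈ (T \ A) \ (C₂ \ A), r j + ∑ j ∈ C₂ \ A, r j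
              = ∑ j ∈ T \ A, r j := by
            rw [Finset.sum_sdiff hC2AT]
          have hones : (v - u) ≤ ∑ j ∈ (T \ A) \ (C₂ \ A), r j := by
            have hcard : ((T \ A) \ (C₂ \ A)).card = v - u := by
              rw [Finset.card_sdiff_of_subset hC2AT]
            calc (v - u) = ∑ _j ∈ (T \ A) \ (C₂ \ A), 1 := by
                  rw [Finset.sum_const, smul_eq_mul, mul_one, hcard]
              _ ≤ ∑ j ∈ (T \ A) \ (C₂ \ A), r j := by
                  refine Finset.sum_le_sum fun j hj => ?_
                  rw [Finset.mem_sdiff, Finset.mem_sdiff] at hj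
                  exact hr j (hTP hj.1.1)
          omega
        omega
    omega

end Key

section Schedule
variable {n : ℕ}

lemma remLoad_one (l : Fin n → ℕ) (S : ℕ → Finset (Fin n)) (i : Fin n) :
    remLoad l S i 1 = l i := by
  simp [remLoad]

lemma remLoad_succ (l : Fin n → ℕ) (S : ℕ → Finset (Fin n)) (i : Fin n) (t : ℕ) (ht : 1 ≤ t) :
    remLoad l S i (t+1) = remLoad l S i t - (if i ∈ S t then 1 else 0) := by
  unfold remLoad
  have hsplit : Finset.Ico 1 (t+1) = insert t (Finset.Ico 1 t) := by
    ext s; simp only [Finset.mem_Ico, Finset.mem_insert]; omega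
  rw [hsplit, Finset.filter_insert]
  split
  · rw [Finset.card_insert_of_notMem (by simp)]
    have h1 : (if i ∈ S t then 1 else 0) = 1 := if_pos ‹i ∈ S t›
    omega
  · have h1 : (if i ∈ S t then 1 else 0) = 0 := if_neg ‹i ∉ S t›
    omega

/-- The Hall-type condition at slot `t`. -/
def HallAt (c : ℕ) (l d : Fin n → ℕ) (S : ℕ → Finset (Fin n)) (M t : ℕ) : Prop :=
  ∀ B ⊆ Finset.univ.filter (fun i => 0 < remLoad l S i t),
    ∑ j ∈ B, remLoad l S j t ≤ capN c M (fun j => d j + 1 - t) B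

lemma HallAt_succ (c : ℕ) (hc : 1 ≤ c) (l d : Fin n → ℕ) (S : ℕ → Finset (Fin n))
    (hS : IsLLF c l d S) (M : ℕ) (hM1 : 1 ≤ M) (hMd : ∀ j, d j + 1 ≤ M) (t : ℕ) (ht : 1 ≤ t)
    (hH : HallAt c l d S M t) : HallAt c l d S M (t+1) := by
  intro B hB
  set P : Finset (Fin n) := Finset.univ.filter (fun i => 0 < remLoad l S i t) with hP
  obtain ⟨hcard, hpos, hlax⟩ := hS t ht
  set w : Fin n → ℕ := fun j => d j + 1 - t with hw
  set r : Fin n → ℕ := fun j => remLoad l S j t with hr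
  have hMw : ∀ j, w j ≤ M := fun j => by
    have := hMd j; simp only [hw]; omega
  have hrP : ∀ j ∈ P, 1 ≤ r j := fun j hj => (Finset.mem_filter.mp hj).2
  have hHP : ∀ B' ⊆ P, ∑ j ∈ B', r j ≤ capN c M w B' := hH
  have hTP : S t ⊆ P := fun i hi => Finset.mem_filter.mpr ⟨Finset.mem_univ i, hpos i hi⟩
  have hrw : ∀ j ∈ P, r j ≤ w j := by
    intro j hj
    have h1 := hHP {j} (Finset.singleton_subset_iff.mpr hj)
    rwa [Finset.sum_singleton, capN_singleton c M hc w j (hMw j)] at h1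
  have hmin : ∀ i ∈ S t, ∀ j ∈ P, j ∉ S t → w i + r j ≤ w j + r i := by
    intro i hi j hj hjT
    have hlx := hlax i hi j (Finset.mem_filter.mp hj).2 hjT
    have hri : 1 ≤ r i := hrP i (hTP hi)
    have hrj : 1 ≤ r j := hrP j hj
    have hwi : r i ≤ w i := hrw i (hTP hi)
    have hwj : r j ≤ w j := hrw j hj
    have hdi : t ≤ d i := by have := hri.trans hwi; simp only [hw] at this ⊢; omega
    have hdj : t ≤ d j := by have := hrj.trans hwj; simp only [hw] at this ⊢; omega
    unfold laxity at hlx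
    have hci : (r i : ℤ) = (remLoad l S i t : ℤ) := rfl
    have hcj : (r j : ℤ) = (remLoad l S j t : ℤ) := rfl
    rw [← hci, ← hcj] at hlx
    simp only [hw]
    omega
  have hBP : B ⊆ P := by
    intro x hx
    have hx' := hB hx
    rw [Finset.mem_filter] at hx' ⊢
    refine ⟨hx'.1, ?_⟩
    have := remLoad_succ l S x t ht
    rw [this] at hx'
    have := hx'.2
    omega
  have hkey := key_step c M hc hM1 w r P (S t) hMw hrP hHP hTP hcard hmin B hBP
  have hLHS : ∑ j ∈ B, remLoad l S j (t+1) = ∑ j ∈ B, (r j - if j ∈ S t then 1 else 0) :=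
    Finset.sum_congr rfl fun j _ => remLoad_succ l S j t ht
  have hRHS : capN c M (fun j => d j + 1 - (t+1)) B = capN c M (fun j => w j - 1) B := by
    have hfun : (fun j : Fin n => d j + 1 - (t+1)) = (fun j => w j - 1) := by
      funext j
      have h1 : w j = d j + 1 - t := rfl
      omega
    rw [hfun]
  rw [hLHS, hRHS]
  exact hkey


lemma HallAt_one (c : ℕ) (hc : 1 ≤ c) (l d : Fin n → ℕ) (S F : ℕ → Finset (Fin n))
    (hF : IsSchedule c F) (hFc : ∀ i, Completes l d F i) (M : ℕ) (hMd : ∀ j, d j + 1 ≤ M) :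
    HallAt c l d S M 1 := by
  intro B _
  have hrem : ∑ j ∈ B, remLoad l S j 1 = ∑ j ∈ B, l j :=
    Finset.sum_congr rfl fun j _ => remLoad_one l S j
  have hfun : (fun j : Fin n => d j + 1 - 1) = d := by funext j; omega
  rw [hrem, hfun]
  have hcnt : ∀ j, l j ≤ ((Finset.Icc 1 M).filter (fun s => j ∈ F s ∧ s ≤ d j)).card := by
    intro j
    refine le_trans (hFc j) (Finset.card_le_card ?_)
    intro s hs
    rw [Finset.mem_filter, Finset.mem_Icc] at hs ⊢
    have := hMd j
    exact ⟨⟨hs.1.1, by omega⟩, hs.2, hs.1.2⟩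
  calc ∑ j ∈ B, l j
      ≤ ∑ j ∈ B, ((Finset.Icc 1 M).filter (fun s => j ∈ F s ∧ s ≤ d j)).card :=
        Finset.sum_le_sum fun j _ => hcnt j
    _ = ∑ j ∈ B, ∑ s ∈ Finset.Icc 1 M, (if j ∈ F s ∧ s ≤ d j then 1 else 0) :=
        Finset.sum_congr rfl fun j _ => Finset.card_filter _ _
    _ = ∑ s ∈ Finset.Icc 1 M, ∑ j ∈ B, (if j ∈ F s ∧ s ≤ d j then 1 else 0) := Finset.sum_comm
    _ = ∑ s ∈ Finset.Icc 1 M, (B.filter (fun j => j ∈ F s ∧ s ≤ d j)).card :=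
        Finset.sum_congr rfl fun s _ => (Finset.card_filter _ _).symm
    _ ≤ ∑ s ∈ Finset.Icc 1 M, min c ((B.filter fun j => s ≤ d j).card) := by
        refine Finset.sum_le_sum fun s _ => le_min ?_ ?_
        · refine le_trans (Finset.card_le_card ?_) (hF s)
          intro x hx
          exact (Finset.mem_filter.mp hx).2.1
        · refine Finset.card_le_card ?_
          intro x hx
          rw [Finset.mem_filter] at hx ⊢
          exact ⟨hx.1, hx.2.2⟩

lemma lax_nonneg_of_feasible (c : ℕ) (hc : 1 ≤ c) (l d : Fin n → ℕ)
    (hfeas : ∃ F : ℕ → Finset (Fin n), IsSchedule c F ∧ ∀ i, Completes l d F i)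
    (S : ℕ → Finset (Fin n)) (hS : IsLLF c l d S) :
    ∀ (i : Fin n) (t : ℕ), 1 ≤ t → 0 < remLoad l S i t → 0 ≤ laxity l d S i t := by
  obtain ⟨F, hF, hFc⟩ := hfeas
  set M : ℕ := Finset.univ.sup d + 1 with hM
  have hMd : ∀ j, d j + 1 ≤ M := fun j => by
    have : d j ≤ Finset.univ.sup d := Finset.le_sup (Finset.mem_univ j)
    omega
  have hM1 : 1 ≤ M := by omega
  have hHall : ∀ t, 1 ≤ t → HallAt c l d S M t := by
    intro t ht
    induction t, ht using Nat.le_induction with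
    | base => exact HallAt_one c hc l d S F hF hFc M hMd
    | succ t ht ih => exact HallAt_succ c hc l d S hS M hM1 hMd t ht ih
  intro i t ht hpos
  have hiP : i ∈ Finset.univ.filter (fun j => 0 < remLoad l S j t) :=
    Finset.mem_filter.mpr ⟨Finset.mem_univ i, hpos⟩
  have h1 := hHall t ht {i} (Finset.singleton_subset_iff.mpr hiP)
  rw [Finset.sum_singleton,
    capN_singleton c M hc (fun j => d j + 1 - t) i (by show d i + 1 - t ≤ M; have := hMd i; omega)] at h1
  have h1' : remLoad l S i t ≤ d i + 1 - t := h1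
  unfold laxity
  omega

lemma completes_of_lax (l d : Fin n → ℕ) (S : ℕ → Finset (Fin n))
    (h : ∀ (i : Fin n) (t : ℕ), 1 ≤ t → 0 < remLoad l S i t → 0 ≤ laxity l d S i t)
    (i : Fin n) : Completes l d S i := by
  by_contra hcon
  unfold Completes at hcon
  push_neg at hcon
  have hpos : 0 < remLoad l S i (d i + 1) := by
    unfold remLoad
    rw [Finset.Ico_add_one_right_eq_Icc]
    omega
  have hlax := h i (d i + 1) (by omega) hpos
  unfold laxity at hlax
  omega

/-- Choice of a least-laxity set of served flows, given remaining loads `R` at slot `t`. -/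
noncomputable def pickT (c : ℕ) (d : Fin n → ℕ) (R : Fin n → ℕ) (t : ℕ) : Finset (Fin n) :=
  (exists_min_key_subset (fun j => (d j : ℤ) + 1 - t - R j)
    (Finset.univ.filter fun i => 0 < R i)
    (min c (Finset.univ.filter fun i => 0 < R i).card) (min_le_right _ _)).choose

lemma pickT_spec (c : ℕ) (d : Fin n → ℕ) (R : Fin n → ℕ) (t : ℕ) :
    pickT c d R t ⊆ (Finset.univ.filter fun i => 0 < R i) ∧
    (pickT c d R t).card = min c (Finset.univ.filter fun i => 0 < R i).card ∧
    ∀ i ∈ pickT c d R t, ∀ j ∈ (Finset.univ.filter fun i => 0 < R i), j ∉ pickT c d R t →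
      (d i : ℤ) + 1 - t - R i ≤ (d j : ℤ) + 1 - t - R j :=
  (exists_min_key_subset (fun j => (d j : ℤ) + 1 - t - R j)
    (Finset.univ.filter fun i => 0 < R i)
    (min c (Finset.univ.filter fun i => 0 < R i).card) (min_le_right _ _)).choose_spec

/-- Remaining loads of the constructed LLF schedule: `llfR c l d k` is the
remaining load at the beginning of slot `k+1`. -/
noncomputable def llfR (c : ℕ) (l d : Fin n → ℕ) : ℕ → Fin n → ℕ
  | 0 => l
  | (k+1) => fun i => llfR c l d k i - (if i ∈ pickT c d (llfR c l d k) (k+1) then 1 else 0)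

/-- The constructed LLF schedule. -/
noncomputable def llfS (c : ℕ) (l d : Fin n → ℕ) : ℕ → Finset (Fin n)
  | 0 => ∅
  | (k+1) => pickT c d (llfR c l d k) (k+1)

lemma llf_rem (c : ℕ) (l d : Fin n → ℕ) :
    ∀ (k : ℕ) (i : Fin n), remLoad l (llfS c l d) i (k+1) = llfR c l d k i := by
  intro k
  induction k with
  | zero => intro i; rw [remLoad_one]; rfl
  | succ k ih =>
    intro i
    rw [remLoad_succ l (llfS c l d) i (k+1) (by omega), ih i]
    rfl

lemma llf_isLLF (c : ℕ) (l d : Fin n → ℕ) : IsLLF c l d (llfS c l d) := by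
  intro t ht
  obtain ⟨k, rfl⟩ : ∃ k, t = k + 1 := ⟨t - 1, by omega⟩
  obtain ⟨hsub, hcard, hmin⟩ := pickT_spec c d (llfR c l d k) (k+1)
  have hposeq : Finset.univ.filter (fun i => 0 < remLoad l (llfS c l d) i (k+1))
      = Finset.univ.filter (fun i => 0 < llfR c l d k i) := by
    apply Finset.filter_congr
    intro i _
    rw [llf_rem]
  have hSeq : llfS c l d (k+1) = pickT c d (llfR c l d k) (k+1) := rfl
  refine ⟨?_, ?_, ?_⟩
  · rw [hSeq, hposeq]; exact hcard
  · intro i hi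
    rw [llf_rem]
    exact (Finset.mem_filter.mp (hsub (hSeq ▸ hi))).2
  · intro i hi j hj hjT
    have hj' : j ∈ Finset.univ.filter (fun i => 0 < llfR c l d k i) := by
      rw [← hposeq]
      exact Finset.mem_filter.mpr ⟨Finset.mem_univ j, hj⟩
    have h1 := hmin i (hSeq ▸ hi) j hj' (fun h => hjT (hSeq ▸ h))
    unfold laxity
    rw [llf_rem, llf_rem]
    push_cast at h1 ⊢
    omega

lemma llf_isSchedule (c : ℕ) (l d : Fin n → ℕ) : IsSchedule c (llfS c l d) := by
  intro t
  cases t with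
  | zero => simp [llfS]
  | succ k =>
    have := (pickT_spec c d (llfR c l d k) (k+1)).2.1
    have h2 : (llfS c l d (k+1)).card = min c (Finset.univ.filter fun i => 0 < llfR c l d k i).card := this
    rw [h2]
    exact min_le_left _ _

end Schedule

/-- **Feasibility ↔ LLF success.**  A finite set of flows is feasibly
schedulable on `c ≥ 1` channels iff the Least-Laxity-First schedule completes
every flow by its deadline, equivalently iff under LLF scheduling the laxity of
every flow remains non-negative until it is completed. -/
theorem llf_feasibility_iff {n : ℕ} (c : ℕ) (hc : 1 ≤ c) (l d : Fin n → ℕ) :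
    ((∃ S : ℕ → Finset (Fin n), IsSchedule c S ∧ ∀ i, Completes l d S i) ↔
      (∀ S : ℕ → Finset (Fin n), IsLLF c l d S → ∀ i, Completes l d S i)) ∧
    ((∃ S : ℕ → Finset (Fin n), IsSchedule c S ∧ ∀ i, Completes l d S i) ↔
      (∀ S : ℕ → Finset (Fin n), IsLLF c l d S →
        ∀ (i : Fin n) (t : ℕ), 1 ≤ t → 0 < remLoad l S i t → 0 ≤ laxity l d S i t)) := by
  constructor
  · constructor
    · intro hfeas S hS i
      exact completes_of_lax l d S (lax_nonneg_of_feasible c hc l d hfeas S hS) i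
    · intro hB
      exact ⟨llfS c l d, llf_isSchedule c l d, hB _ (llf_isLLF c l d)⟩
  · constructor
    · intro hfeas S hS
      exact lax_nonneg_of_feasible c hc l d hfeas S hS
    · intro hC
      exact ⟨llfS c l d, llf_isSchedule c l d,
        fun i => completes_of_lax l d _ (hC _ (llf_isLLF c l d)) i⟩
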